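/- arXiv:1709.03570 — 2 statements merged into one kernel-verified Lean document; each statement's English description precedes it below -/
import Mathlib

section
/- The sequence t ↦ t·z_t is nondecreasing on ℕ. -/
open Set

/-- Real-valued Bernoulli KL formula. -/
noncomputable def klBerR (p q : ℝ) : ℝ :=
  p * Real.log (p / q) + (1 - p) * Real.log ((1 - p) / (1 - q))

/-!
Write `c = N/(N+1)` and `φ y = kl(μ + c y, μ)`. On `[0, 1-μ]` the function `φ` is continuous,
convex and strictly increasing (the Bernoulli divergence is minus the binary entropy plus an
affine function), and `φ 0 = 0`. Since `κ > δ` (the sum raised to the power `N/(N+1)` in `κ`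
is at least `1`, its `l = 0` or `t = 1` term alone being `1`), the level `f t` is positive and
`t f t = log (κ log₂(2t) / δ)` is nondecreasing. If `φ z_t = f t`, then for `s ≤ t`
convexity gives `φ((s/t) z_s) ≤ (s/t) φ(z_s) ≤ (s/t) f s ≤ f t = φ(z_t)`, hence
`(s/t) z_s ≤ z_t`; here `φ(z_s) ≤ f s` also when `z_s` is the cap `1-μ`, because otherwise the
intermediate value theorem would produce a root. If there is no root at `t`, then
`z_t = 1-μ ≥ z_s`.
-/

open Real

theorem klBerR_self (q : ℝ) : klBerR q q = 0 := by
  simp [klBerR]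

theorem klBerR_eq_neg_binEntropy {q : ℝ} (hq0 : 0 < q) (hq1 : q < 1) (p : ℝ) :
    klBerR p q = -binEntropy p - p * log q - (1 - p) * log (1 - q) := by
  have mul_log_div : ∀ a b : ℝ, b ≠ 0 →
      a * log (a / b) = -(a * log a⁻¹) - a * log b := by
    intro a b hb
    rcases eq_or_ne a 0 with rfl | ha
    · simp
    · rw [log_div ha hb, log_inv]; ring
  rw [klBerR, binEntropy, mul_log_div p q hq0.ne', mul_log_div (1 - p) (1 - q) (by linarith)]
  ring

section
variable {q : ℝ}

theorem continuous_klBerR_left (hq0 : 0 < q) (hq1 : q < 1) : Continuous (klBerR · q) := by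
  simp_rw [klBerR_eq_neg_binEntropy hq0 hq1]
  fun_prop

theorem convexOn_klBerR_left (hq0 : 0 < q) (hq1 : q < 1) :
    ConvexOn ℝ (Icc 0 1) (klBerR · q) := by
  have h := (strictConcave_binEntropy.concaveOn.neg.add
    ((LinearMap.mulLeft ℝ (log (1 - q) - log q)).convexOn (convex_Icc 0 1))).add_const
    (-log (1 - q))
  refine h.congr fun p _ => ?_
  simp only [Pi.add_apply, Pi.neg_apply, LinearMap.mulLeft_apply,
    klBerR_eq_neg_binEntropy hq0 hq1]
  ring

theorem hasDerivAt_klBerR_left (hq0 : 0 < q) (hq1 : q < 1) {p : ℝ} (hp0 : p ≠ 0)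
    (hp1 : p ≠ 1) :
    HasDerivAt (klBerR · q) (log p - log (1 - p) - log q + log (1 - q)) p := by
  simp_rw [klBerR_eq_neg_binEntropy hq0 hq1]
  exact (((hasDerivAt_binEntropy hp0 hp1).neg.sub ((hasDerivAt_id p).mul_const (log q))).sub
    (((hasDerivAt_id p).const_sub 1).mul_const (log (1 - q)))).congr_deriv (by ring)

theorem strictMonoOn_klBerR_left (hq0 : 0 < q) (hq1 : q < 1) :
    StrictMonoOn (klBerR · q) (Icc q 1) := by
  refine strictMonoOn_of_deriv_pos (convex_Icc q 1)
    (continuous_klBerR_left hq0 hq1).continuousOn ?_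
  rw [interior_Icc]
  rintro p ⟨hqp, hp1⟩
  rw [(hasDerivAt_klBerR_left hq0 hq1 (by linarith) hp1.ne).deriv]
  have hlog_left := log_lt_log hq0 hqp
  have hlog_right := log_lt_log (sub_pos.2 hp1) (by linarith : 1 - p < 1 - q)
  linarith

end

theorem ConvexOn.map_mul_le_mul_of_map_zero {f : ℝ → ℝ} {s : Set ℝ} (hf : ConvexOn ℝ s f)
    (h0s : 0 ∈ s) (hf0 : f 0 = 0) {x a : ℝ} (hx : x ∈ s) (ha0 : 0 ≤ a) (ha1 : a ≤ 1) :
    f (a * x) ≤ a * f x := by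
  simpa [hf0] using hf.2 h0s hx (sub_nonneg.2 ha1) ha0 (by ring)

def IsCappedRoot (φ : ℝ → ℝ) (B v z : ℝ) : Prop :=
  z ∈ Ioc 0 B ∧ ((∃ y ∈ Ioc 0 B, φ y = v) → φ z = v) ∧
    ((¬∃ y ∈ Ioc 0 B, φ y = v) → z = B)

namespace IsCappedRoot

variable {φ : ℝ → ℝ} {B v z : ℝ}

theorem map_le (h : IsCappedRoot φ B v z) (hcont : ContinuousOn φ (Icc 0 B)) (h0 : φ 0 = 0)
    (hv : 0 < v) : φ z ≤ v := by
  obtain ⟨⟨hz0, hzB⟩, hroot, hcap⟩ := h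
  by_cases hsolv : ∃ y ∈ Ioc 0 B, φ y = v
  · exact (hroot hsolv).le
  rw [hcap hsolv]
  by_contra! hBv
  obtain ⟨y, ⟨hy0, hyB⟩, hyv⟩ :=
    intermediate_value_Icc (hz0.le.trans hzB) hcont ⟨h0.symm ▸ hv.le, hBv.le⟩
  refine hsolv ⟨y, ⟨hy0.lt_of_ne ?_, hyB⟩, hyv⟩
  rintro rfl
  exact hv.ne' (hyv ▸ h0)

theorem mul_le_mul {s t vs vt zs zt : ℝ} (hzs : IsCappedRoot φ B vs zs)
    (hzt : IsCappedRoot φ B vt zt) (hconv : ConvexOn ℝ (Icc 0 B) φ)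
    (hmono : StrictMonoOn φ (Icc 0 B))
    (hcont : ContinuousOn φ (Icc 0 B)) (h0 : φ 0 = 0) (hs : 0 < s) (hst : s ≤ t) (hvs : 0 < vs)
    (hv : s * vs ≤ t * vt) : s * zs ≤ t * zt := by
  have ht : 0 < t := hs.trans_le hst
  obtain ⟨hzs0, hzsB⟩ := hzs.1
  by_cases hsolv : ∃ y ∈ Ioc 0 B, φ y = vt
  swap
  · rw [hzt.2.2 hsolv]
    nlinarith
  have hφzt : φ zt = vt := hzt.2.1 hsolv
  set r := s / t with hr
  have hr0 : 0 ≤ r := by positivity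
  have hr1 : r ≤ 1 := div_le_one_of_le₀ hst ht.le
  have hB : 0 ≤ B := hzs0.le.trans hzsB
  have hrzs : r * zs ∈ Icc 0 B := ⟨by positivity, by nlinarith⟩
  have key : φ (r * zs) ≤ φ zt := calc
    φ (r * zs) ≤ r * φ zs :=
      hconv.map_mul_le_mul_of_map_zero ⟨le_rfl, hB⟩ h0 ⟨hzs0.le, hzsB⟩ hr0 hr1
    _ ≤ r * vs := by gcongr; exact hzs.map_le hcont h0 hvs
    _ ≤ vt := by rw [hr, div_mul_eq_mul_div, div_le_iff₀ ht]; linarith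
    _ = φ zt := hφzt.symm
  have hle : r * zs ≤ zt := (hmono.le_iff_le hrzs ⟨hzt.1.1.le, hzt.1.2⟩).1 key
  calc s * zs = t * (r * zs) := by rw [hr]; field_simp
    _ ≤ t * zt := by gcongr

end IsCappedRoot

section
variable {μ c : ℝ}

theorem mapsTo_const_add_mul_Icc (hμ1 : μ < 1) (hc0 : 0 ≤ c) (hc1 : c ≤ 1) :
    MapsTo (fun y => μ + c * y) (Icc 0 (1 - μ)) (Icc μ 1) := fun _ ⟨hy0, hy1⟩ =>
  ⟨by nlinarith, by nlinarith⟩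

theorem convexOn_klBerR_const_add_mul (hμ0 : 0 < μ) (hμ1 : μ < 1) (hc0 : 0 ≤ c)
    (hc1 : c ≤ 1) :
    ConvexOn ℝ (Icc 0 (1 - μ)) (fun y => klBerR (μ + c * y) μ) :=
  (((convexOn_klBerR_left hμ0 hμ1).translate_right μ).comp_linearMap
    (LinearMap.mulLeft ℝ c)).subset
    (fun _ hy => Icc_subset_Icc_left hμ0.le (mapsTo_const_add_mul_Icc hμ1 hc0 hc1 hy))
    (convex_Icc _ _)

theorem strictMonoOn_klBerR_const_add_mul (hμ0 : 0 < μ) (hμ1 : μ < 1) (hc0 : 0 < c)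
    (hc1 : c ≤ 1) : StrictMonoOn (fun y => klBerR (μ + c * y) μ) (Icc 0 (1 - μ)) :=
  (strictMonoOn_klBerR_left hμ0 hμ1).comp (fun _ _ _ _ h => by gcongr)
    (mapsTo_const_add_mul_Icc hμ1 hc0.le hc1)

end

theorem one_le_ite_sum_add_mul_tsum {l N : ℕ} {r : ℝ} (hN : 1 ≤ N) (hr : 1 < r) :
    1 ≤ (if l ≠ 0 then ∑ t ∈ Finset.Icc 1 N, logb 2 (2 * (t : ℝ)) ^ (-r) else 0)
      + N * ∑' k : ℕ, ((k : ℝ) + l + 1) ^ (-r) := by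
  have htsum : 0 ≤ ∑' k : ℕ, ((k : ℝ) + l + 1) ^ (-r) := tsum_nonneg fun _ => by positivity
  have hN' : (1 : ℝ) ≤ N := by exact_mod_cast hN
  split_ifs with hl
  · have hsum : 1 ≤ ∑ t ∈ Finset.Icc 1 N, logb 2 (2 * (t : ℝ)) ^ (-r) := by
      refine le_of_eq_of_le (by simp)
        (Finset.single_le_sum (f := fun t : ℕ => logb 2 (2 * (t : ℝ)) ^ (-r))
          (fun t ht => rpow_nonneg (logb_nonneg one_lt_two ?_) _)
          (Finset.mem_Icc.2 ⟨le_rfl, hN⟩))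
      have : (1 : ℝ) ≤ t := by exact_mod_cast (Finset.mem_Icc.1 ht).1
      linarith
    nlinarith
  · obtain rfl : l = 0 := not_not.1 hl
    have hsummable : Summable fun k : ℕ => ((k : ℝ) + (0 : ℕ) + 1) ^ (-r) := by
      simpa using (summable_nat_add_iff 1).2 (summable_nat_rpow.2 (neg_lt_neg hr))
    have : 1 ≤ ∑' k : ℕ, ((k : ℝ) + (0 : ℕ) + 1) ^ (-r) := by
      simpa using hsummable.le_tsum 0 fun _ _ => by positivity
    nlinarith

theorem lt_rpow_mul_rpow_of_lt_one {δ S a b : ℝ} (hδ0 : 0 < δ) (hδ1 : δ < 1) (hS : 1 ≤ S)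
    (hb : 0 < b) (hab : a + b = 1) : δ < δ ^ a * S ^ b := calc
  δ = δ ^ a * δ ^ b := by rw [← rpow_add hδ0, hab, rpow_one]
  _ < δ ^ a * S ^ b := by gcongr; exact hδ1.trans_le hS

section
variable {κ δ u : ℝ}

theorem one_le_logb_two_two_mul (hu : 1 ≤ u) : 1 ≤ logb 2 (2 * u) := by
  rw [le_logb_iff_rpow_le one_lt_two (by positivity), rpow_one]
  linarith

theorem log_mul_logb_two_two_mul_div_pos (hδ0 : 0 < δ) (hδκ : δ < κ) (hu : 1 ≤ u) :
    0 < log (κ * logb 2 (2 * u) / δ) := by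
  refine log_pos ((one_lt_div hδ0).2 ?_)
  nlinarith [one_le_logb_two_two_mul hu]

theorem log_mul_logb_two_two_mul_div_le (hδ0 : 0 < δ) (hδκ : δ < κ) (hu : 1 ≤ u) {v : ℝ}
    (huv : u ≤ v) : log (κ * logb 2 (2 * u) / δ) ≤ log (κ * logb 2 (2 * v) / δ) := by
  have hκ0 : 0 < κ := hδ0.trans hδκ
  have hlogb : 0 < logb 2 (2 * u) := one_pos.trans_le (one_le_logb_two_two_mul hu)
  gcongr
  linarith
end

/-- Lemma: the sequence `t ↦ t·z_t` is nondecreasing on `ℕ`. -/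
theorem lil_klucb_t_mul_z_nondecreasing
    (μ : ℝ) (hμ : μ ∈ Set.Ioo (0:ℝ) 1)
    (δ : ℝ) (hδ : δ ∈ Set.Ioo (0:ℝ) 1)
    (l N : ℕ) (hN : N = 2 ^ l)
    (κ : ℝ)
    (hκ : κ = δ ^ ((1:ℝ)/((N:ℝ)+1)) *
      ((if l ≠ 0 then
          ∑ t ∈ Finset.Icc 1 N, (Real.logb 2 (2*(t:ℝ))) ^ (-(((N:ℝ)+1)/(N:ℝ)))
        else 0)
        + (N:ℝ) * ∑' k : ℕ, ((k:ℝ) + (l:ℝ) + 1) ^ (-(((N:ℝ)+1)/(N:ℝ))))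
        ^ ((N:ℝ)/((N:ℝ)+1)))
    (f : ℕ → ℝ)
    (hf : ∀ t : ℕ, f t = Real.log (κ * Real.logb 2 (2*(t:ℝ)) / δ) / (t:ℝ))
    (z : ℕ → ℝ)
    (hz : ∀ t : ℕ, 0 < t →
      z t ∈ Set.Ioc (0:ℝ) (1 - μ) ∧
      ((∃ y ∈ Set.Ioc (0:ℝ) (1 - μ),
          klBerR (μ + ((N:ℝ)/((N:ℝ)+1)) * y) μ = f t) →
        klBerR (μ + ((N:ℝ)/((N:ℝ)+1)) * z t) μ = f t) ∧
      ((¬ ∃ y ∈ Set.Ioc (0:ℝ) (1 - μ),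
          klBerR (μ + ((N:ℝ)/((N:ℝ)+1)) * y) μ = f t) →
        z t = 1 - μ)) :
    ∀ s t : ℕ, 0 < s → s ≤ t → (s:ℝ) * z s ≤ (t:ℝ) * z t := by
  obtain ⟨hμ0, hμ1⟩ := hμ
  obtain ⟨hδ0, hδ1⟩ := hδ
  have hN1 : (1 : ℝ) ≤ N := by exact_mod_cast hN ▸ Nat.one_le_two_pow
  have hδκ : δ < κ := hκ ▸ lt_rpow_mul_rpow_of_lt_one hδ0 hδ1
    (one_le_ite_sum_add_mul_tsum (by exact_mod_cast hN1)
      ((one_lt_div (by positivity)).2 (by linarith)))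
    (by positivity) (by field_simp; ring)
  have hc0 : 0 < (N : ℝ) / (N + 1) := by positivity
  have hc1 : (N : ℝ) / (N + 1) ≤ 1 := div_le_one_of_le₀ (by linarith) (by positivity)
  intro s t hs hst
  have hs1 : (1 : ℝ) ≤ s := by exact_mod_cast hs
  have hst' : (s : ℝ) ≤ t := by exact_mod_cast hst
  have ht : 0 < t := hs.trans_le hst
  have hmul_f : ∀ u : ℕ, 0 < u → (u : ℝ) * f u = log (κ * logb 2 (2 * u) / δ) :=
    fun u hu => by rw [hf, mul_div_cancel₀ _ (by positivity)]
  refine IsCappedRoot.mul_le_mul (hz s hs) (hz t ht)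
    (convexOn_klBerR_const_add_mul hμ0 hμ1 hc0.le hc1)
    (strictMonoOn_klBerR_const_add_mul hμ0 hμ1 hc0 hc1)
    ((continuous_klBerR_left hμ0 hμ1).comp (by fun_prop)).continuousOn (by simp [klBerR_self])
    (by positivity) hst' ?_ ?_
  · rw [hf]
    exact div_pos (log_mul_logb_two_two_mul_div_pos hδ0 hδκ hs1) (by positivity)
  · rw [hmul_f s hs, hmul_f t ht]
    exact log_mul_logb_two_two_mul_div_le hδ0 hδκ hs1 hst'
end

section
/- With the sub-Gaussian deviation sequence z_t = √( (1/2) · ((N+1)/N)² · log(κ(N)·log₂(2t)/δ) / t ), the anytime bound P( ∃ t ∈ ℕ : μ̂_t − μ > z_t ) ≤ δ holds. -/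
/-!
Write `W t = ∑ j < t, Y j - t μ`. By Hoeffding's lemma each `Y j - μ` is sub-Gaussian with
variance proxy `1/4`, so `exp (s W t)` is a nonnegative submartingale and Doob's maximal
inequality gives `P (∃ t ≤ m, a ≤ W t) ≤ exp (-2 a² / m)`.

Peeling: the times `t ≤ N` (when `l ≠ 0`) are handled one at a time, all later times in the
geometric blocks `2 ^ (j / N) ≤ t < 2 ^ ((j + 1) / N)` with `j ≥ l N`. On a block the boundary
`t z_t` is at least its value at the left end, and since `2 ^ (1 / N) ≤ (N + 1) / N` one maximal
inequality over the block loses only a factor `(N + 1) / N` in the exponent. With `c = (N + 1) / N`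
and `S` the sum inside `κ(N)`, the choice of `κ(N)` makes `(κ x / δ) ^ (-c) = (δ / S) x ^ (-c)`,
so time `t` costs `(δ / S) log₂(2t) ^ (-c)` and block `j` costs `(δ / S) (1 + j / N) ^ (-c)`;
grouping the blocks `N` at a time, these weights add up to `(δ / S) S = δ`.
-/

open MeasureTheory ProbabilityTheory Set
open Real Finset
open scoped ENNReal NNReal

def HasMaximalHoeffdingTail {Ω : Type*} [MeasurableSpace Ω] (P : Measure Ω)
    (W : ℕ → Ω → ℝ) : Prop :=
  ∀ (m : ℕ) (a : ℝ), 0 ≤ a →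
    P {ω | ∃ t ∈ Finset.Icc 1 m, a ≤ W t ω} ≤ ENNReal.ofReal (exp (-(2 * a ^ 2 / m)))

section Maximal

variable {Ω : Type*} [MeasurableSpace Ω] {P : Measure Ω} [IsProbabilityMeasure P]

theorem submartingale_prod_range_succ {G : ℕ → Ω → ℝ} (hmeas : ∀ i, Measurable (G i))
    (hindep : iIndepFun G P) (hnonneg : ∀ i ω, 0 ≤ G i ω) (hint : ∀ i, Integrable (G i) P)
    (hmean : ∀ i, 1 ≤ P[G i]) :
    Submartingale (fun n ω => ∏ i ∈ range (n + 1), G i ω)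
      (Filtration.natural G fun i => (hmeas i).stronglyMeasurable) P := by
  set ℱ := Filtration.natural G fun i => (hmeas i).stronglyMeasurable
  have hprod_succ : ∀ n, (fun ω => ∏ i ∈ range (n + 2), G i ω) =
      (fun ω => ∏ i ∈ range (n + 1), G i ω) * G (n + 1) := fun n => by
    ext ω; simp [prod_range_succ _ (n + 1)]
  have hadapted : StronglyAdapted ℱ fun n ω => ∏ i ∈ range (n + 1), G i ω := fun n =>
    (Finset.measurable_prod _ fun i hi =>
      (Filtration.stronglyAdapted_natural _ i).measurable.mono
        (ℱ.mono (Nat.lt_succ_iff.mp (mem_range.mp hi))) le_rfl).stronglyMeasurable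
  have hint_prod : ∀ n, Integrable (fun ω => ∏ i ∈ range (n + 1), G i ω) P := by
    intro n
    induction n with
    | zero => simpa using hint 0
    | succ n ih =>
      rw [hprod_succ]
      refine IndepFun.integrable_mul ?_ ih (hint _)
      simpa [Finset.prod_fn] using hindep.indepFun_prod_range_succ hmeas (n + 1)
  refine submartingale_nat hadapted hint_prod fun n => ?_
  have hpull := condExp_mul_of_stronglyMeasurable_left (m := ℱ n) (hadapted n)
    (hprod_succ n ▸ hint_prod (n + 1)) (hint (n + 1))
  have hindep_cond := hindep.condExp_natural_ae_eq_of_lt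
    (fun i => (hmeas i).stronglyMeasurable) (Nat.lt_succ_self n)
  rw [hprod_succ n]
  filter_upwards [hpull, hindep_cond] with ω h1 h2
  rw [h1, Pi.mul_apply, h2]
  exact le_mul_of_one_le_right (prod_nonneg fun i _ => hnonneg i ω) (hmean _)

theorem one_le_integral_exp_mul {X : Ω → ℝ} {c : ℝ≥0} (hX : HasSubgaussianMGF X c P)
    (hmean : P[X] = 0) (s : ℝ) : 1 ≤ P[fun ω => exp (s * X ω)] :=
  calc (1 : ℝ) = P[fun ω => 1 + s * X ω] := by
        rw [integral_add (integrable_const 1) (hX.integrable.const_mul s), integral_const_mul,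
          hmean]
        simp
    _ ≤ P[fun ω => exp (s * X ω)] :=
        integral_mono ((integrable_const 1).add (hX.integrable.const_mul s))
          (hX.integrable_exp_mul s) fun ω => by linarith [add_one_le_exp (s * X ω)]

/-- Doob's maximal inequality for the submartingale `exp (s * ∑ i ≤ n, X i)`, followed by the
Chernoff optimisation `s = a / (m c)`. -/
theorem measure_exists_sum_range_ge_le_of_iIndepFun {X : ℕ → Ω → ℝ} {c : ℝ≥0}
    (hmeas : ∀ i, Measurable (X i)) (hindep : iIndepFun X P)
    (hX : ∀ i, HasSubgaussianMGF (X i) c P) (hmean : ∀ i, P[X i] = 0)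
    (m : ℕ) {a : ℝ} (ha : 0 ≤ a) :
    P {ω | ∃ t ∈ Finset.Icc 1 m, a ≤ ∑ i ∈ range t, X i ω} ≤
      ENNReal.ofReal (exp (-a ^ 2 / (2 * m * c))) := by
  rcases eq_or_ne ((m : ℝ) * c) 0 with hmc | hmc
  · simp [mul_assoc, hmc, prob_le_one]
  obtain ⟨n, rfl⟩ : ∃ n, m = n + 1 := Nat.exists_eq_succ_of_ne_zero (by rintro rfl; simp at hmc)
  set s := a / ((n + 1 : ℕ) * c)
  have hs : 0 ≤ s := by positivity
  set G : ℕ → Ω → ℝ := fun i ω => exp (s * X i ω)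
  have hsub := submartingale_prod_range_succ (G := G) (fun i => by fun_prop)
    (hindep.comp (fun _ x => exp (s * x)) fun _ => by fun_prop) (fun i ω => (exp_pos _).le)
    (fun i => (hX i).integrable_exp_mul s) fun i => one_le_integral_exp_mul (hX i) (hmean i) s
  have hprod : ∀ k ω, ∏ i ∈ range (k + 1), G i ω = exp (s * ∑ i ∈ range (k + 1), X i ω) :=
    fun k ω => by simp [G, mul_sum, exp_sum]
  set ε : ℝ≥0 := ⟨exp (s * a), (exp_pos _).le⟩
  have hevent : {ω | ∃ t ∈ Finset.Icc 1 (n + 1), a ≤ ∑ i ∈ range t, X i ω} ⊆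
      {ω | (ε : ℝ) ≤ (range (n + 1)).sup' nonempty_range_add_one
        fun k => ∏ i ∈ range (k + 1), G i ω} := by
    rintro ω ⟨t, ht, hat⟩
    obtain ⟨k, rfl⟩ : ∃ k, t = k + 1 := Nat.exists_eq_succ_of_ne_zero (by simp at ht; omega)
    refine le_trans ?_ (le_sup' (fun k => ∏ i ∈ range (k + 1), G i ω)
      (mem_range.mpr (show k < n + 1 by simp at ht; omega)))
    simp only [hprod]
    exact exp_le_exp.mpr (mul_le_mul_of_nonneg_left hat hs)
  have hmgf : P[fun ω => ∏ i ∈ range (n + 1), G i ω] ≤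
      exp (s * a) * exp (-a ^ 2 / (2 * (n + 1 : ℕ) * c)) := by
    simp only [hprod]
    calc _ ≤ exp ((∑ i ∈ range (n + 1), c) * s ^ 2 / 2) :=
          (HasSubgaussianMGF.sum_of_iIndepFun hindep fun i _ => hX i).mgf_le s
      _ = _ := by
          rw [← exp_add]; congr 1
          simp only [sum_const, card_range, nsmul_eq_mul, NNReal.coe_mul, NNReal.coe_natCast, s]
          field_simp
          ring
  have hdoob := maximal_ineq hsub (fun k ω => prod_nonneg fun i _ => (exp_pos _).le) (ε := ε) n
  have hε : (ε : ℝ≥0∞) ≠ 0 :=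
    ENNReal.coe_ne_zero.mpr fun h => (exp_pos (s * a)).ne' (congrArg NNReal.toReal h)
  refine (ENNReal.mul_le_mul_iff_right hε ENNReal.coe_ne_top).mp ?_
  calc (ε : ℝ≥0∞) * P _ ≤ ε * P _ := mul_le_mul_right (measure_mono hevent) _
    _ ≤ ENNReal.ofReal (P[fun ω => ∏ i ∈ range (n + 1), G i ω]) :=
        hdoob.trans (ENNReal.ofReal_le_ofReal (setIntegral_le_integral
          (hsub.integrable n) (ae_of_all _ fun ω => prod_nonneg fun i _ => (exp_pos _).le)))
    _ ≤ ENNReal.ofReal (exp (s * a) * exp (-a ^ 2 / (2 * (n + 1 : ℕ) * c))) :=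
        ENNReal.ofReal_le_ofReal hmgf
    _ = ε * ENNReal.ofReal (exp (-a ^ 2 / (2 * (n + 1 : ℕ) * c))) := by
        rw [ENNReal.ofReal_mul (exp_pos _).le, ← ENNReal.ofReal_coe_nnreal]; rfl

theorem hasMaximalHoeffdingTail_sum_range_sub_mul {Y : ℕ → Ω → ℝ}
    (hmeas : ∀ i, Measurable (Y i)) (hindep : iIndepFun Y P)
    (hbdd : ∀ i ω, Y i ω ∈ Set.Icc (0 : ℝ) 1) {μ : ℝ} (hmean : ∀ i, P[Y i] = μ) :
    HasMaximalHoeffdingTail P fun t ω => ∑ i ∈ range t, Y i ω - t * μ := by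
  intro m a ha
  have hX : ∀ i, HasSubgaussianMGF (fun ω => Y i ω - μ) ((‖(1 : ℝ) - 0‖₊ / 2) ^ 2) P :=
    fun i => hmean i ▸ hasSubgaussianMGF_of_mem_Icc (hmeas i).aemeasurable (ae_of_all _ (hbdd i))
  have hcentered : ∀ i, P[fun ω => Y i ω - μ] = 0 := fun i => by
    rw [integral_sub (Integrable.of_mem_Icc 0 1 (hmeas i).aemeasurable (ae_of_all _ (hbdd i)))
      (integrable_const μ), hmean i]
    simp
  have h := measure_exists_sum_range_ge_le_of_iIndepFun (fun i => (hmeas i).sub_const μ)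
    (hindep.comp (fun _ x => x - μ) fun _ => measurable_id.sub_const μ) hX hcentered m ha
  simp only [sum_sub_distrib, sum_const, card_range, nsmul_eq_mul] at h
  convert h using 3
  norm_num
  ring

end Maximal

theorem two_rpow_one_div_le {N : ℕ} (hN : 0 < N) : (2 : ℝ) ^ ((1 : ℝ) / N) ≤ ((N : ℝ) + 1) / N := by
  have hN' : (0 : ℝ) < N := by exact_mod_cast hN
  have hbern : (2 : ℝ) ≤ (((N : ℝ) + 1) / N) ^ (N : ℝ) := by
    have := one_add_mul_self_le_rpow_one_add (s := 1 / (N : ℝ))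
      (by linarith [one_div_nonneg.mpr hN'.le]) (by exact_mod_cast hN : (1 : ℝ) ≤ N)
    rw [mul_one_div_cancel hN'.ne', one_add_one_eq_two] at this
    rwa [add_div, div_self hN'.ne']
  calc (2 : ℝ) ^ ((1 : ℝ) / N) ≤ ((((N : ℝ) + 1) / N) ^ (N : ℝ)) ^ ((1 : ℝ) / N) := by gcongr
    _ = ((N : ℝ) + 1) / N := by
        rw [← rpow_mul (by positivity), mul_one_div_cancel hN'.ne', rpow_one]

theorem le_rpow_mul_rpow {δ S p : ℝ} (hδ : 0 < δ) (hδS : δ ≤ S) (hp : 0 ≤ p) :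
    δ ≤ δ ^ (1 / (p + 1)) * S ^ (p / (p + 1)) :=
  calc δ = δ ^ (1 / (p + 1)) * δ ^ (p / (p + 1)) := by
        rw [← rpow_add hδ, ← add_div, add_comm, div_self (by positivity), rpow_one]
    _ ≤ δ ^ (1 / (p + 1)) * S ^ (p / (p + 1)) := by gcongr

theorem mul_div_rpow_neg_eq {κ δ S p x : ℝ} (hδ : 0 < δ) (hS : 0 < S) (hp : 0 < p)
    (hκ : κ = δ ^ (1 / (p + 1)) * S ^ (p / (p + 1))) (hx : 0 < x) :
    (κ * x / δ) ^ (-((p + 1) / p)) = δ / S * x ^ (-((p + 1) / p)) := by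
  subst hκ
  rw [rpow_def_of_pos (by positivity), rpow_def_of_pos hx, ← exp_log (div_pos hδ hS),
    ← exp_add, log_div (by positivity) hδ.ne', log_mul (by positivity) hx.ne',
    log_mul (by positivity) (by positivity), log_rpow hδ, log_rpow hS, log_div hδ.ne' hS.ne']
  congr 1
  field_simp
  ring

theorem logb_two_mul {t : ℝ} (ht : 0 < t) : logb 2 (2 * t) = 1 + logb 2 t := by
  rw [logb_mul two_ne_zero ht.ne', logb_self_eq_one one_lt_two]

theorem one_le_logb_two_mul_natCast {t : ℕ} (ht : 1 ≤ t) : 1 ≤ logb 2 (2 * (t : ℝ)) := by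
  rw [logb_two_mul (by positivity), le_add_iff_nonneg_right]
  exact logb_nonneg one_lt_two (by exact_mod_cast ht)

noncomputable def peelingMass (l N : ℕ) : ℝ :=
  (if l ≠ 0 then ∑ t ∈ Finset.Icc 1 N, logb 2 (2 * (t : ℝ)) ^ (-(((N : ℝ) + 1) / N)) else 0) +
    N * ∑' k : ℕ, ((k : ℝ) + l + 1) ^ (-(((N : ℝ) + 1) / N))

theorem summable_natCast_add_rpow_neg (l : ℕ) {c : ℝ} (hc : 1 < c) :
    Summable fun k : ℕ => ((k : ℝ) + l + 1) ^ (-c) := by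
  refine ((summable_nat_add_iff (l + 1)).mpr
    ((summable_nat_rpow (p := -c)).mpr (by linarith))).congr fun k => ?_
  push_cast
  ring_nf

theorem one_le_peelingMass {l N : ℕ} (hN : N = 2 ^ l) : 1 ≤ peelingMass l N := by
  set c : ℝ := ((N : ℝ) + 1) / N
  have hN1 : 1 ≤ N := hN ▸ Nat.one_le_two_pow
  have hN0 : (0 : ℝ) < N := by exact_mod_cast hN1
  have hc : 1 < c := by rw [lt_div_iff₀ hN0]; linarith
  have hsmall : ∀ t ∈ Finset.Icc 1 N, 0 ≤ logb 2 (2 * (t : ℝ)) ^ (-c) := fun t ht =>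
    rpow_nonneg (zero_le_one.trans (one_le_logb_two_mul_natCast (Finset.mem_Icc.mp ht).1)) _
  have htail := summable_natCast_add_rpow_neg l hc
  have htail_nonneg : ∀ k : ℕ, 0 ≤ ((k : ℝ) + l + 1) ^ (-c) := fun k => by positivity
  rcases eq_or_ne l 0 with rfl | hl
  · have hN_one : (N : ℝ) = 1 := by simp [hN]
    have := htail.le_tsum 0 fun k _ => htail_nonneg k
    simp only [CharP.cast_eq_zero, add_zero, zero_add, one_rpow] at this
    simpa [peelingMass, hN_one, c] using this
  · have h1 : 1 ≤ ∑ t ∈ Finset.Icc 1 N, logb 2 (2 * (t : ℝ)) ^ (-c) := by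
      have := single_le_sum hsmall (Finset.mem_Icc.mpr ⟨le_rfl, hN1⟩)
      simpa using this
    simp only [peelingMass, if_pos hl]
    have : 0 ≤ (N : ℝ) * ∑' k : ℕ, ((k : ℝ) + l + 1) ^ (-c) :=
      mul_nonneg hN0.le (tsum_nonneg htail_nonneg)
    linarith

def smallTimes (l N : ℕ) : Finset ℕ := if l ≠ 0 then Finset.Icc 1 N else ∅

theorem one_le_of_mem_smallTimes {l N t : ℕ} (ht : t ∈ smallTimes l N) : 1 ≤ t := by
  unfold smallTimes at ht
  split_ifs at ht
  exacts [(Finset.mem_Icc.mp ht).1, absurd ht (Finset.notMem_empty t)]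

theorem sum_smallTimes (l N : ℕ) (f : ℕ → ℝ) :
    ∑ t ∈ smallTimes l N, f t = if l ≠ 0 then ∑ t ∈ Finset.Icc 1 N, f t else 0 := by
  unfold smallTimes
  split_ifs <;> simp

def geomBlock (N j : ℕ) : Set ℕ :=
  {t | (2 : ℝ) ^ ((j : ℝ) / N) ≤ t ∧ (t : ℝ) < (2 : ℝ) ^ (((j : ℝ) + 1) / N)}

theorem mem_geomBlock_floor_mul_logb {N t : ℕ} (hN : 0 < N) (ht : 1 ≤ t) :
    t ∈ geomBlock N ⌊N * logb 2 t⌋₊ := by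
  have hN' : (0 : ℝ) < N := by exact_mod_cast hN
  have ht' : (0 : ℝ) < t := by exact_mod_cast ht
  constructor
  · rw [← logb_le_logb one_lt_two (by positivity) ht', logb_rpow two_pos (by norm_num),
      div_le_iff₀' hN']
    exact Nat.floor_le (mul_nonneg hN'.le (logb_nonneg one_lt_two (by exact_mod_cast ht)))
  · rw [← logb_lt_logb_iff one_lt_two ht' (by positivity), logb_rpow two_pos (by norm_num),
      lt_div_iff₀' hN']
    exact Nat.lt_floor_add_one _

theorem exists_mem_geomBlock {l N t : ℕ} (hN : N = 2 ^ l) (ht : N ≤ t) :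
    ∃ k, ∃ r < N, t ∈ geomBlock N ((k + l) * N + r) := by
  have hN0 : 0 < N := hN ▸ Nat.two_pow_pos l
  set j := ⌊N * logb 2 t⌋₊
  have hlj : l * N ≤ j := by
    refine Nat.le_floor ?_
    have hl : (l : ℝ) ≤ logb 2 t := by
      rw [le_logb_iff_rpow_le one_lt_two (by exact_mod_cast hN0.trans_le ht), rpow_natCast]
      exact_mod_cast hN ▸ ht
    push_cast
    nlinarith [(Nat.cast_pos.mpr hN0 : (0 : ℝ) < N)]
  refine ⟨j / N - l, j % N, Nat.mod_lt j hN0, ?_⟩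
  rw [Nat.sub_add_cancel ((Nat.le_div_iff_mul_le hN0).mpr hlj), mul_comm, Nat.div_add_mod]
  exact mem_geomBlock_floor_mul_logb hN0 (Nat.one_le_iff_ne_zero.mpr (by omega))

theorem mem_smallTimes_or_exists_mem_geomBlock {l N t : ℕ} (hN : N = 2 ^ l) (ht : 0 < t) :
    t ∈ smallTimes l N ∨ ∃ k, ∃ r < N, t ∈ geomBlock N ((k + l) * N + r) := by
  by_cases hsmall : l ≠ 0 ∧ t ≤ N
  · left
    simpa [smallTimes, hsmall.1] using ⟨ht, hsmall.2⟩
  · right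
    refine exists_mem_geomBlock hN ?_
    rcases not_and_or.mp hsmall with hl | hlt
    · rw [hN, not_not.mp hl]; exact ht
    · omega

noncomputable def anytimeRadius (N : ℕ) (κ δ : ℝ) (t : ℕ) : ℝ :=
  √((1 / 2) * (((N : ℝ) + 1) / N) ^ 2 * log (κ * logb 2 (2 * (t : ℝ)) / δ) / t)

section Peeling

variable {Ω : Type*} [MeasurableSpace Ω] {P : Measure Ω} {W : ℕ → Ω → ℝ}

theorem measure_exists_ge_le_rpow_neg
    (hmax : HasMaximalHoeffdingTail P W)
    {m : ℕ} {a c y : ℝ} (ha : 0 ≤ a) (hy : 0 < y) (h : c * log y ≤ 2 * a ^ 2 / m) :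
    P {ω | ∃ t ∈ Finset.Icc 1 m, a ≤ W t ω} ≤ ENNReal.ofReal (y ^ (-c)) := by
  refine (hmax m a ha).trans (ENNReal.ofReal_le_ofReal ?_)
  rw [rpow_def_of_pos hy]
  exact exp_le_exp.mpr (by linarith)

variable {l N : ℕ} {κ δ S : ℝ}

theorem one_le_mul_div (hδ : 0 < δ) (hδκ : δ ≤ κ) {x : ℝ} (hx : 1 ≤ x) : 1 ≤ κ * x / δ := by
  rw [le_div_iff₀ hδ]
  nlinarith

theorem mul_anytimeRadius_sq (hδ : 0 < δ) (hδκ : δ ≤ κ) {t : ℕ} (ht : 1 ≤ t) :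
    ((t : ℝ) * anytimeRadius N κ δ t) ^ 2 =
      (1 / 2) * (((N : ℝ) + 1) / N) ^ 2 * log (κ * logb 2 (2 * (t : ℝ)) / δ) * t := by
  have hlog := log_nonneg (one_le_mul_div hδ hδκ (one_le_logb_two_mul_natCast ht))
  have ht' : (0 : ℝ) < t := by exact_mod_cast ht
  rw [anytimeRadius, mul_pow, sq_sqrt (by positivity)]
  field_simp

theorem measure_lt_mul_anytimeRadius_le
    (hmax : HasMaximalHoeffdingTail P W)
    (hN : 0 < N) (hδ : 0 < δ) (hδκ : δ ≤ κ) {t : ℕ} (ht : 1 ≤ t) :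
    P {ω | t * anytimeRadius N κ δ t < W t ω} ≤
      ENNReal.ofReal ((κ * logb 2 (2 * (t : ℝ)) / δ) ^ (-(((N : ℝ) + 1) / N))) := by
  have hy := one_le_mul_div hδ hδκ (one_le_logb_two_mul_natCast ht)
  have hc : 1 ≤ ((N : ℝ) + 1) / N := by
    rw [le_div_iff₀ (by exact_mod_cast hN)]; linarith
  have hsub : {ω | t * anytimeRadius N κ δ t < W t ω} ⊆
      {ω | ∃ s ∈ Finset.Icc 1 t, t * anytimeRadius N κ δ t ≤ W s ω} :=
    fun ω hω => ⟨t, Finset.mem_Icc.mpr ⟨ht, le_rfl⟩, le_of_lt hω⟩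
  refine (measure_mono hsub).trans (measure_exists_ge_le_rpow_neg hmax
    (mul_nonneg (by positivity) (sqrt_nonneg _)) (by linarith) ?_)
  have ht' : (0 : ℝ) < t := by exact_mod_cast ht
  rw [mul_anytimeRadius_sq hδ hδκ ht]
  field_simp
  nlinarith [log_nonneg hy]

theorem measure_biUnion_geomBlock_le
    (hmax : HasMaximalHoeffdingTail P W)
    (hN : 0 < N) (hδ : 0 < δ) (hδκ : δ ≤ κ) (j : ℕ) :
    P (⋃ t ∈ geomBlock N j, {ω | t * anytimeRadius N κ δ t < W t ω}) ≤
      ENNReal.ofReal ((κ * (1 + (j : ℝ) / N) / δ) ^ (-(((N : ℝ) + 1) / N))) := by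
  have hN' : (0 : ℝ) < N := by exact_mod_cast hN
  have hκ : 0 < κ := hδ.trans_le hδκ
  set c : ℝ := ((N : ℝ) + 1) / N
  have hc : 1 ≤ c := by rw [le_div_iff₀ hN']; linarith
  set x : ℝ := 1 + (j : ℝ) / N
  have hy : 1 ≤ κ * x / δ :=
    one_le_mul_div hδ hδκ (le_add_of_nonneg_right (div_nonneg (Nat.cast_nonneg j) hN'.le))
  have hlog := log_nonneg hy
  set s : ℝ := (2 : ℝ) ^ ((j : ℝ) / N)
  have hs : 1 ≤ s := one_le_rpow one_le_two (by positivity)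
  set m : ℕ := ⌊(2 : ℝ) ^ (((j : ℝ) + 1) / N)⌋₊
  have hm : (m : ℝ) ≤ s * c := by
    calc (m : ℝ) ≤ (2 : ℝ) ^ (((j : ℝ) + 1) / N) := Nat.floor_le (by positivity)
      _ = s * 2 ^ ((1 : ℝ) / N) := by rw [← rpow_add two_pos, add_div]
      _ ≤ s * c := by gcongr; exact two_rpow_one_div_le hN
  have hm0 : (0 : ℝ) < m := by
    exact_mod_cast Nat.le_floor (by simpa using one_le_rpow one_le_two (by positivity))
  set a : ℝ := √((1 / 2) * c ^ 2 * log (κ * x / δ) * s)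
  have ha : a ^ 2 = (1 / 2) * c ^ 2 * log (κ * x / δ) * s := sq_sqrt (by positivity)
  have hsub : (⋃ t ∈ geomBlock N j, {ω | t * anytimeRadius N κ δ t < W t ω}) ⊆
      {ω | ∃ t ∈ Finset.Icc 1 m, a ≤ W t ω} := by
    intro ω hω
    simp only [mem_iUnion] at hω
    obtain ⟨t, ⟨hst, htm⟩, hW⟩ := hω
    have ht : 1 ≤ t := by exact_mod_cast hs.trans hst
    refine ⟨t, Finset.mem_Icc.mpr ⟨ht, Nat.le_floor htm.le⟩, le_trans ?_ hW.le⟩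
    have hx : x ≤ logb 2 (2 * (t : ℝ)) := by
      rw [logb_two_mul (by positivity), add_le_add_iff_left]
      exact (le_logb_iff_rpow_le one_lt_two (by positivity)).mpr hst
    calc a ≤ √(((t : ℝ) * anytimeRadius N κ δ t) ^ 2) := by
          rw [mul_anytimeRadius_sq hδ hδκ ht]
          refine sqrt_le_sqrt (mul_le_mul (mul_le_mul_of_nonneg_left ?_ (by positivity)) hst
            (by positivity) (mul_nonneg (by positivity) (log_nonneg (hy.trans (by gcongr)))))
          exact log_le_log (by positivity) (by gcongr)
      _ = t * anytimeRadius N κ δ t := sqrt_sq (mul_nonneg (Nat.cast_nonneg t) (sqrt_nonneg _))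
  refine (measure_mono hsub).trans
    (measure_exists_ge_le_rpow_neg hmax (sqrt_nonneg _) (by linarith) ?_)
  rw [ha, le_div_iff₀ hm0]
  nlinarith [mul_le_mul_of_nonneg_left hm (mul_nonneg (by linarith : (0 : ℝ) ≤ c) hlog)]

theorem measure_biUnion_lt_mul_anytimeRadius_le
    (hmax : HasMaximalHoeffdingTail P W)
    (hN : 0 < N) (hδ : 0 < δ) (hδS : δ ≤ S)
    (hκ : κ = δ ^ (1 / ((N : ℝ) + 1)) * S ^ ((N : ℝ) / ((N : ℝ) + 1)))
    {D : Finset ℕ} (hD : ∀ t ∈ D, 1 ≤ t) :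
    P (⋃ t ∈ D, {ω | t * anytimeRadius N κ δ t < W t ω}) ≤
      ENNReal.ofReal (δ / S * ∑ t ∈ D, logb 2 (2 * (t : ℝ)) ^ (-(((N : ℝ) + 1) / N))) := by
  have hS : 0 < S := hδ.trans_le hδS
  have hδκ : δ ≤ κ := hκ ▸ le_rpow_mul_rpow hδ hδS (Nat.cast_nonneg N)
  have hL : ∀ t ∈ D, 0 < logb 2 (2 * (t : ℝ)) := fun t ht =>
    zero_lt_one.trans_le (one_le_logb_two_mul_natCast (hD t ht))
  calc _ ≤ ∑ t ∈ D, P {ω | t * anytimeRadius N κ δ t < W t ω} := measure_biUnion_finset_le D _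
    _ ≤ ∑ t ∈ D, ENNReal.ofReal (δ / S * logb 2 (2 * (t : ℝ)) ^ (-(((N : ℝ) + 1) / N))) :=
        sum_le_sum fun t ht => by
          rw [← mul_div_rpow_neg_eq hδ hS (by exact_mod_cast hN) hκ (hL t ht)]
          exact measure_lt_mul_anytimeRadius_le hmax hN hδ hδκ (hD t ht)
    _ = _ := by
        rw [← ENNReal.ofReal_sum_of_nonneg fun t ht => by have := hL t ht; positivity, mul_sum]

theorem measure_iUnion_geomBlock_le
    (hmax : HasMaximalHoeffdingTail P W)
    (hN : 0 < N) (hδ : 0 < δ) (hδS : δ ≤ S)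
    (hκ : κ = δ ^ (1 / ((N : ℝ) + 1)) * S ^ ((N : ℝ) / ((N : ℝ) + 1))) (l : ℕ) :
    P (⋃ k, ⋃ r ∈ range N, ⋃ t ∈ geomBlock N ((k + l) * N + r),
        {ω | t * anytimeRadius N κ δ t < W t ω}) ≤
      ENNReal.ofReal (δ / S * (N * ∑' k : ℕ, ((k : ℝ) + l + 1) ^ (-(((N : ℝ) + 1) / N)))) := by
  have hN' : (0 : ℝ) < N := by exact_mod_cast hN
  have hS : 0 < S := hδ.trans_le hδS
  have hδκ : δ ≤ κ := hκ ▸ le_rpow_mul_rpow hδ hδS hN'.le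
  set c : ℝ := ((N : ℝ) + 1) / N
  have hc : 1 < c := by rw [lt_div_iff₀ hN']; linarith
  have hblock : ∀ k, ∀ r ∈ range N,
      P (⋃ t ∈ geomBlock N ((k + l) * N + r), {ω | t * anytimeRadius N κ δ t < W t ω}) ≤
        ENNReal.ofReal (δ / S * ((k : ℝ) + l + 1) ^ (-c)) := fun k r _ => by
    have hj : (k : ℝ) + l + 1 ≤ 1 + (((k + l) * N + r : ℕ) : ℝ) / N := by
      push_cast
      rw [add_div, mul_div_cancel_right₀ _ hN'.ne']
      linarith [div_nonneg (Nat.cast_nonneg r) hN'.le]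
    refine (measure_biUnion_geomBlock_le hmax hN hδ hδκ _).trans (ENNReal.ofReal_le_ofReal ?_)
    rw [mul_div_rpow_neg_eq hδ hS hN' hκ (by positivity)]
    exact mul_le_mul_of_nonneg_left (rpow_le_rpow_of_nonpos (by positivity) hj (by linarith))
      (by positivity)
  calc _ ≤ ∑' k, ∑ r ∈ range N, P (⋃ t ∈ geomBlock N ((k + l) * N + r),
          {ω | t * anytimeRadius N κ δ t < W t ω}) :=
        (measure_iUnion_le _).trans (ENNReal.tsum_le_tsum fun k => measure_biUnion_finset_le _ _)
    _ ≤ ∑' k : ℕ, ∑ r ∈ range N, ENNReal.ofReal (δ / S * ((k : ℝ) + l + 1) ^ (-c)) :=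
        ENNReal.tsum_le_tsum fun k => sum_le_sum (hblock k)
    _ = _ := by
        simp only [sum_const, card_range, nsmul_eq_mul, ← ENNReal.ofReal_natCast,
          ← ENNReal.ofReal_mul hN'.le]
        rw [← ENNReal.ofReal_tsum_of_nonneg (fun k => by positivity)
          (((summable_natCast_add_rpow_neg l hc).mul_left _).mul_left _), tsum_mul_left,
          tsum_mul_left]
        congr 1
        ring

theorem measure_exists_lt_mul_anytimeRadius_le
    (hmax : HasMaximalHoeffdingTail P W)
    (hδ : 0 < δ) (hδ1 : δ ≤ 1) (hN : N = 2 ^ l)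
    (hκ : κ = δ ^ (1 / ((N : ℝ) + 1)) * peelingMass l N ^ ((N : ℝ) / ((N : ℝ) + 1))) :
    P {ω | ∃ t : ℕ, 0 < t ∧ t * anytimeRadius N κ δ t < W t ω} ≤ ENNReal.ofReal δ := by
  have hN0 : 0 < N := hN ▸ Nat.two_pow_pos l
  have hδS : δ ≤ peelingMass l N := hδ1.trans (one_le_peelingMass hN)
  have hcover : {ω | ∃ t : ℕ, 0 < t ∧ t * anytimeRadius N κ δ t < W t ω} ⊆
      (⋃ t ∈ smallTimes l N, {ω | t * anytimeRadius N κ δ t < W t ω}) ∪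
        ⋃ k, ⋃ r ∈ range N, ⋃ t ∈ geomBlock N ((k + l) * N + r),
          {ω | t * anytimeRadius N κ δ t < W t ω} := by
    rintro ω ⟨t, ht, hω⟩
    rcases mem_smallTimes_or_exists_mem_geomBlock hN ht with hsmall | ⟨k, r, hr, hmem⟩
    · exact Or.inl (mem_biUnion hsmall hω)
    · exact Or.inr (mem_iUnion.mpr ⟨k, mem_biUnion (Finset.mem_coe.mpr (mem_range.mpr hr))
        (mem_biUnion hmem hω)⟩)
  calc _ ≤ _ := measure_mono hcover
    _ ≤ _ := measure_union_le _ _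
    _ ≤ _ := add_le_add (measure_biUnion_lt_mul_anytimeRadius_le hmax hN0 hδ hδS hκ
          fun t => one_le_of_mem_smallTimes)
        (measure_iUnion_geomBlock_le hmax hN0 hδ hδS hκ l)
    _ = ENNReal.ofReal δ := by
        have hS : 0 < peelingMass l N := hδ.trans_le hδS
        have hsmall_nonneg :
            0 ≤ ∑ t ∈ smallTimes l N, logb 2 (2 * (t : ℝ)) ^ (-(((N : ℝ) + 1) / N)) :=
          sum_nonneg fun t ht => rpow_nonneg
            (zero_le_one.trans (one_le_logb_two_mul_natCast (one_le_of_mem_smallTimes ht))) _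
        rw [← ENNReal.ofReal_add (by positivity) (by positivity), ← mul_add, sum_smallTimes]
        congr 1
        exact div_mul_cancel₀ δ (hδ.trans_le hδS).ne'

end Peeling

theorem lil_subgaussian_anytime_deviation_general
    {Ω : Type*} [MeasurableSpace Ω] (P : Measure Ω) [IsProbabilityMeasure P]
    (Y : ℕ → Ω → ℝ) (hmeas : ∀ i, Measurable (Y i))
    (hindep : iIndepFun Y P)
    (hbdd : ∀ i ω, Y i ω ∈ Set.Icc (0:ℝ) 1)
    (μ : ℝ)
    (hmean : ∀ i, ∫ ω, Y i ω ∂P = μ)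
    (δ : ℝ) (hδ : δ ∈ Set.Ioo (0:ℝ) 1)
    (l N : ℕ) (hN : N = 2 ^ l)
    (κ : ℝ)
    (hκ : κ = δ ^ ((1:ℝ)/((N:ℝ)+1)) *
      ((if l ≠ 0 then
          ∑ t ∈ Finset.Icc 1 N, (Real.logb 2 (2*(t:ℝ))) ^ (-(((N:ℝ)+1)/(N:ℝ)))
        else 0)
        + (N:ℝ) * ∑' k : ℕ, ((k:ℝ) + (l:ℝ) + 1) ^ (-(((N:ℝ)+1)/(N:ℝ))))
        ^ ((N:ℝ)/((N:ℝ)+1)))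
    (z : ℕ → ℝ)
    (hz : ∀ t : ℕ, z t =
      Real.sqrt ((1/2) * (((N:ℝ)+1)/(N:ℝ))^2 *
        Real.log (κ * Real.logb 2 (2*(t:ℝ)) / δ) / (t:ℝ))) :
    P {ω | ∃ t : ℕ, 0 < t ∧
        (∑ j ∈ Finset.range t, Y j ω) / (t:ℝ) - μ > z t} ≤ ENNReal.ofReal δ := by
  have hevent : {ω | ∃ t : ℕ, 0 < t ∧ (∑ j ∈ range t, Y j ω) / (t : ℝ) - μ > z t} =
      {ω | ∃ t : ℕ, 0 < t ∧ t * anytimeRadius N κ δ t < ∑ j ∈ range t, Y j ω - t * μ} := by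
    ext ω
    refine exists_congr fun t => and_congr_right fun ht => ?_
    have ht' : (0 : ℝ) < t := by exact_mod_cast ht
    rw [hz t, gt_iff_lt, show (∑ j ∈ range t, Y j ω) / t - μ = (∑ j ∈ range t, Y j ω - t * μ) / t
      by field_simp, lt_div_iff₀ ht', mul_comm]
    rfl
  rw [hevent]
  exact measure_exists_lt_mul_anytimeRadius_le
    (hasMaximalHoeffdingTail_sum_range_sub_mul hmeas hindep hbdd hmean) hδ.1 hδ.2.le hN hκ

/-- Theorem: with the sub-Gaussian deviation sequence
`z_t = √( (1/2)·((N+1)/N)²·log(κ(N)·log₂(2t)/δ)/t )`, the anytime bound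
`P(∃ t : μ̂_t - μ > z_t) ≤ δ` holds. -/
theorem lil_subgaussian_anytime_deviation
    {Ω : Type*} [MeasurableSpace Ω] (P : Measure Ω) [IsProbabilityMeasure P]
    (Y : ℕ → Ω → ℝ) (hmeas : ∀ i, Measurable (Y i))
    (hindep : iIndepFun Y P)
    (hident : ∀ i, IdentDistrib (Y i) (Y 0) P P)
    (hbdd : ∀ i ω, Y i ω ∈ Set.Icc (0:ℝ) 1)
    (μ : ℝ) (hμ : μ ∈ Set.Ioo (0:ℝ) 1)
    (hmean : ∀ i, ∫ ω, Y i ω ∂P = μ)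
    (δ : ℝ) (hδ : δ ∈ Set.Ioo (0:ℝ) 1)
    (l N : ℕ) (hN : N = 2 ^ l)
    (κ : ℝ)
    (hκ : κ = δ ^ ((1:ℝ)/((N:ℝ)+1)) *
      ((if l ≠ 0 then
          ∑ t ∈ Finset.Icc 1 N, (Real.logb 2 (2*(t:ℝ))) ^ (-(((N:ℝ)+1)/(N:ℝ)))
        else 0)
        + (N:ℝ) * ∑' k : ℕ, ((k:ℝ) + (l:ℝ) + 1) ^ (-(((N:ℝ)+1)/(N:ℝ))))
        ^ ((N:ℝ)/((N:ℝ)+1)))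
    (z : ℕ → ℝ)
    (hz : ∀ t : ℕ, z t =
      Real.sqrt ((1/2) * (((N:ℝ)+1)/(N:ℝ))^2 *
        Real.log (κ * Real.logb 2 (2*(t:ℝ)) / δ) / (t:ℝ))) :
    P {ω | ∃ t : ℕ, 0 < t ∧
        (∑ j ∈ Finset.range t, Y j ω) / (t:ℝ) - μ > z t} ≤ ENNReal.ofReal δ :=
  lil_subgaussian_anytime_deviation_general P Y hmeas hindep hbdd μ hmean δ hδ l N hN κ hκ z hz
end
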